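/- An element (γ, s, t) with γ = (γ₁ ≥ γ₂ ≥ 0) ∈ ℝ² and s, t ∈ ℝ, s ≥ 0, t ≥ 0, belongs to S(1,1) if and only if γ₁ − γ₂ ≥ |s − t| and γ₁ + γ₂ ≥ s + t. -/

import Mathlib

open Matrix

/-- Eigenvalues of a (Hermitian) complex matrix, listed in decreasing order. -/
noncomputable def eigVec {k : ℕ} (X : Matrix (Fin k) (Fin k) ℂ) (hX : X.IsHermitian) :
    Fin k → ℝ :=
  fun i => hX.eigenvalues (Tuple.sort hX.eigenvalues i.rev)

/-- The `i`-th (0-based) singular value of a rectangular complex matrix: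
the square root of the `i`-th largest eigenvalue of `Y * Yᴴ` (and `0` for `i ≥ a`). -/
noncomputable def sval {a b : ℕ} (Y : Matrix (Fin a) (Fin b) ℂ) (i : ℕ) : ℝ :=
  if h : i < a then
    Real.sqrt (eigVec (Y * Yᴴ) (Matrix.isHermitian_mul_conjTranspose_self Y) ⟨i, h⟩)
  else 0

/-- The Horn cone `Horn(k)`. -/
def Horn (k : ℕ) : Set ((Fin k → ℝ) × (Fin k → ℝ) × (Fin k → ℝ)) :=
  { v | ∃ (X Y : Matrix (Fin k) (Fin k) ℂ) (hX : X.IsHermitian) (hY : Y.IsHermitian),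
      v.1 = eigVec X hX ∧ v.2.1 = eigVec Y hY ∧ v.2.2 = eigVec (X + Y) (hX.add hY) }

/-- The Littlewood–Richardson cone `LR(m,n)`. -/
def LRcone (m n : ℕ) : Set ((Fin (m + n) → ℝ) × (Fin m → ℝ) × (Fin n → ℝ)) :=
  { v | ∃ (M : Matrix (Fin (m + n)) (Fin (m + n)) ℂ) (hM : M.IsHermitian),
      v.1 = eigVec M hM ∧
      v.2.1 = eigVec (M.submatrix (Fin.castAdd n) (Fin.castAdd n))
        (hM.submatrix (Fin.castAdd n)) ∧
      v.2.2 = eigVec (M.submatrix (Fin.natAdd m) (Fin.natAdd m))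
        (hM.submatrix (Fin.natAdd m)) }

/-- Top-left `p × p` block. -/
def blockTL (p q : ℕ) (X : Matrix (Fin (p + q)) (Fin (p + q)) ℂ) : Matrix (Fin p) (Fin p) ℂ :=
  X.submatrix (Fin.castAdd q) (Fin.castAdd q)

/-- Top-right `p × q` block. -/
def blockTR (p q : ℕ) (X : Matrix (Fin (p + q)) (Fin (p + q)) ℂ) : Matrix (Fin p) (Fin q) ℂ :=
  X.submatrix (Fin.castAdd q) (Fin.natAdd p)

/-- Bottom-left `q × p` block. -/
def blockBL (p q : ℕ) (X : Matrix (Fin (p + q)) (Fin (p + q)) ℂ) : Matrix (Fin q) (Fin p) ℂ :=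
  X.submatrix (Fin.natAdd p) (Fin.castAdd q)

/-- Bottom-right `q × q` block. -/
def blockBR (p q : ℕ) (X : Matrix (Fin (p + q)) (Fin (p + q)) ℂ) : Matrix (Fin q) (Fin q) ℂ :=
  X.submatrix (Fin.natAdd p) (Fin.natAdd p)

/-- `λ* = (−λ_k, …, −λ_1)`. -/
def starVec {k : ℕ} (x : Fin k → ℝ) : Fin k → ℝ := fun i => -x i.rev

/-- `ŝ^{p,q} = (s₁, …, s_q, 0, …, 0, −s_q, …, −s₁) ∈ ℝ^{p+q}` (with `p − q` middle zeros). -/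
noncomputable def hatPQ (p q : ℕ) (s : Fin q → ℝ) : Fin (p + q) → ℝ :=
  fun i =>
    if h : (i : ℕ) < q then s ⟨i, h⟩
    else if h' : (i : ℕ) < p then 0
    else -s ⟨p + q - 1 - i, by have := i.isLt; omega⟩

/-- The cone `A(p,q)`: pairs `(e(X), s(X₁₂))` for `X` Hermitian of size `p+q`. -/
def coneA (p q : ℕ) : Set ((Fin (p + q) → ℝ) × (Fin q → ℝ)) :=
  { v | ∃ (X : Matrix (Fin (p + q)) (Fin (p + q)) ℂ) (hX : X.IsHermitian),
      v.1 = eigVec X hX ∧ ∀ i : Fin q, v.2 i = sval (blockTR p q X) (i : ℕ) }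

/-- The cone `S(p,q)`: triples `(s(X), s(X₁₂), s(X₂₁))`. -/
def coneS (p q : ℕ) : Set ((Fin (p + q) → ℝ) × (Fin q → ℝ) × (Fin q → ℝ)) :=
  { v | ∃ X : Matrix (Fin (p + q)) (Fin (p + q)) ℂ,
      (∀ i : Fin (p + q), v.1 i = sval X (i : ℕ)) ∧
      (∀ i : Fin q, v.2.1 i = sval (blockTR p q X) (i : ℕ)) ∧
      (∀ i : Fin q, v.2.2 i = sval (blockBL p q X) (i : ℕ)) }

/-- The cone `T(p,q)`: triples `(s(X), s(X₁₁), s(X₂₂))`. -/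
def coneT (p q : ℕ) : Set ((Fin (p + q) → ℝ) × (Fin p → ℝ) × (Fin q → ℝ)) :=
  { v | ∃ X : Matrix (Fin (p + q)) (Fin (p + q)) ℂ,
      (∀ i : Fin (p + q), v.1 i = sval X (i : ℕ)) ∧
      (∀ i : Fin p, v.2.1 i = sval (blockTL p q X) (i : ℕ)) ∧
      (∀ i : Fin q, v.2.2 i = sval (blockBR p q X) (i : ℕ)) }

/-- `μ(A) = (a_r − r ≥ … ≥ a₂ − 2 ≥ a₁ − 1)` as a decreasing real vector, for
`A = {a₁ < … < a_r}` a subset of `[n]` (0-based indexing internally). -/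
noncomputable def muVec {n r : ℕ} (A : Finset (Fin n)) (h : A.card = r) : Fin r → ℝ :=
  fun k => (((A.orderIsoOfFin h k.rev : Fin n) : ℕ) : ℝ) - ((k.rev : ℕ) : ℝ)

/-- `A^o = {ℓ + 1 − a : a ∈ A}` inside `[ℓ]`. -/
def opp {n : ℕ} (A : Finset (Fin n)) : Finset (Fin n) := A.image Fin.rev

/-- `|s|_{K ∩ [q]}` where `K ⊆ [n]`, `s ∈ ℝ^q` and `[q]` is viewed inside `[n]`. -/
noncomputable def sumRestr {n q : ℕ} (s : Fin q → ℝ) (K : Finset (Fin n)) : ℝ :=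
  ∑ i ∈ K, (if h : (i : ℕ) < q then s ⟨i, h⟩ else 0)

/-- The augmented matrix `Ŷ^{p,q} = [[0, Y], [Yᴴ, 0]]` of size `p + q`. -/
def hatM (p q : ℕ) (Y : Matrix (Fin p) (Fin q) ℂ) : Matrix (Fin (p + q)) (Fin (p + q)) ℂ :=
  Matrix.reindex finSumFinEquiv finSumFinEquiv (Matrix.fromBlocks 0 Y Yᴴ 0)


/-!
The singular values `σ₀ ≥ σ₁ ≥ 0` of a `2 × 2` matrix `X` are pinned down by
`σ₀² + σ₁² = ∑ |Xᵢⱼ|²` and `σ₀ σ₁ = |det X|`. The triangle inequality applied to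
`det X = X₀₀ X₁₁ - X₀₁ X₁₀` gives `(σ₀ ∓ σ₁)² ≥ (|X₀₀| - |X₁₁|)² + (|X₀₁| ∓ |X₁₀|)²`, hence the
two inequalities. Conversely, when they hold there are real `a, b` with
`a² + b² = γ₁² + γ₂² - s² - t²` and `a b = γ₁ γ₂ - s t`, and the real matrix `[[a, s], [-t, b]]`
has singular values `γ` and off-diagonal entries of absolute values `s, t`.
-/

section eigVec

variable {k : ℕ} {X : Matrix (Fin k) (Fin k) ℂ} (hX : X.IsHermitian)

lemma eigVec_antitone : Antitone (eigVec X hX) := fun _ _ hij =>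
  Tuple.monotone_sort hX.eigenvalues (Fin.rev_le_rev.mpr hij)

lemma sum_eigVec : ∑ i, eigVec X hX i = ∑ i, hX.eigenvalues i :=
  (Equiv.sum_comp Fin.revPerm (hX.eigenvalues ∘ Tuple.sort hX.eigenvalues)).trans
    (Equiv.sum_comp _ _)

lemma prod_eigVec : ∏ i, eigVec X hX i = ∏ i, hX.eigenvalues i :=
  (Equiv.prod_comp Fin.revPerm (hX.eigenvalues ∘ Tuple.sort hX.eigenvalues)).trans
    (Equiv.prod_comp _ _)

end eigVec

section sval

open scoped ComplexOrder in
lemma eigVec_mul_conjTranspose_nonneg {a b : ℕ} (Y : Matrix (Fin a) (Fin b) ℂ) (i : Fin a) :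
    0 ≤ eigVec (Y * Yᴴ) (isHermitian_mul_conjTranspose_self Y) i :=
  (posSemidef_self_mul_conjTranspose Y).eigenvalues_nonneg _

lemma sval_sq {a b : ℕ} (Y : Matrix (Fin a) (Fin b) ℂ) (i : Fin a) :
    sval Y i ^ 2 = eigVec (Y * Yᴴ) (isHermitian_mul_conjTranspose_self Y) i := by
  rw [sval, dif_pos i.isLt, Real.sq_sqrt (eigVec_mul_conjTranspose_nonneg Y i)]

lemma sval_nonneg {a b : ℕ} (Y : Matrix (Fin a) (Fin b) ℂ) (i : ℕ) : 0 ≤ sval Y i := by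
  unfold sval; split_ifs <;> positivity

lemma sval_antitone {a b : ℕ} (Y : Matrix (Fin a) (Fin b) ℂ) :
    Antitone fun i : Fin a => sval Y i := fun i j hij => by
  simp only [sval, dif_pos i.isLt, dif_pos j.isLt]
  exact Real.sqrt_le_sqrt (eigVec_antitone _ hij)

lemma trace_mul_conjTranspose_self {a b : ℕ} (Y : Matrix (Fin a) (Fin b) ℂ) :
    (Y * Yᴴ).trace = ((∑ i, ∑ j, ‖Y i j‖ ^ 2 : ℝ) : ℂ) := by
  simp [trace, mul_apply, Complex.mul_conj, Complex.normSq_eq_norm_sq]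

lemma sum_sval_sq {a b : ℕ} (Y : Matrix (Fin a) (Fin b) ℂ) :
    ∑ i : Fin a, sval Y i ^ 2 = ∑ i, ∑ j, ‖Y i j‖ ^ 2 := by
  have h := (isHermitian_mul_conjTranspose_self Y).trace_eq_sum_eigenvalues
  rw [trace_mul_conjTranspose_self, ← RCLike.ofReal_sum] at h
  simp only [sval_sq, sum_eigVec]
  exact RCLike.ofReal_injective h.symm

lemma prod_sval {n : ℕ} (Y : Matrix (Fin n) (Fin n) ℂ) : ∏ i : Fin n, sval Y i = ‖Y.det‖ := by
  have h := (isHermitian_mul_conjTranspose_self Y).det_eq_prod_eigenvalues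
  rw [det_mul, det_conjTranspose, Complex.star_def, Complex.mul_conj,
    Complex.normSq_eq_norm_sq, ← RCLike.ofReal_prod] at h
  simp only [sval, dif_pos (Fin.isLt _)]
  rw [← Real.sqrt_prod _ fun i _ => eigVec_mul_conjTranspose_nonneg Y i, prod_eigVec,
    ← Real.sqrt_sq (norm_nonneg Y.det)]
  exact congrArg Real.sqrt (RCLike.ofReal_injective h.symm)

lemma sval_fin_one (Y : Matrix (Fin 1) (Fin 1) ℂ) : sval Y 0 = ‖Y 0 0‖ := by
  simpa using prod_sval Y

end sval

section normDet

variable {𝕜 : Type*} [NormedField 𝕜] (A : Matrix (Fin 2) (Fin 2) 𝕜)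

lemma norm_det_fin_two_le : ‖A.det‖ ≤ ‖A 0 0‖ * ‖A 1 1‖ + ‖A 0 1‖ * ‖A 1 0‖ := by
  rw [det_fin_two, ← norm_mul, ← norm_mul]
  exact norm_sub_le _ _

lemma norm_mul_norm_le_norm_det_fin_two_add :
    ‖A 0 1‖ * ‖A 1 0‖ ≤ ‖A 0 0‖ * ‖A 1 1‖ + ‖A.det‖ := by
  rw [det_fin_two, norm_sub_rev, ← norm_mul, ← norm_mul]
  linarith [norm_sub_norm_le (A 0 1 * A 1 0) (A 0 0 * A 1 1)]

end normDet

section finTwo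

variable (X : Matrix (Fin 2) (Fin 2) ℂ)

lemma sval_fin_two_sq_add_sq :
    sval X 0 ^ 2 + sval X 1 ^ 2 = ‖X 0 0‖ ^ 2 + ‖X 0 1‖ ^ 2 + ‖X 1 0‖ ^ 2 + ‖X 1 1‖ ^ 2 := by
  simpa [Fin.sum_univ_two, add_assoc] using sum_sval_sq X

lemma sval_zero_mul_sval_one : sval X 0 * sval X 1 = ‖X.det‖ := by
  simpa [Fin.prod_univ_two] using prod_sval X

lemma abs_norm_sub_norm_le_sval_sub : |‖X 0 1‖ - ‖X 1 0‖| ≤ sval X 0 - sval X 1 := by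
  have hsq := sval_fin_two_sq_add_sq X
  have hmul := sval_zero_mul_sval_one X
  have hdet := norm_det_fin_two_le X
  have h01 : sval X 1 ≤ sval X 0 := sval_antitone X (Fin.zero_le 1)
  refine abs_le_of_sq_le_sq ?_ (by linarith)
  nlinarith [sq_nonneg (‖X 0 0‖ - ‖X 1 1‖)]

lemma norm_add_norm_le_sval_add : ‖X 0 1‖ + ‖X 1 0‖ ≤ sval X 0 + sval X 1 := by
  have hsq := sval_fin_two_sq_add_sq X
  have hmul := sval_zero_mul_sval_one X
  have hdet := norm_mul_norm_le_norm_det_fin_two_add X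
  refine (sq_le_sq₀ (by positivity) (add_nonneg (sval_nonneg X 0) (sval_nonneg X 1))).mp ?_
  nlinarith [sq_nonneg (‖X 0 0‖ - ‖X 1 1‖)]

end finTwo

lemma eq_and_eq_of_sq_add_sq_eq_of_mul_eq {x₀ x₁ y₀ y₁ : ℝ} (hx₁ : 0 ≤ x₁) (hx : x₁ ≤ x₀)
    (hy₁ : 0 ≤ y₁) (hy : y₁ ≤ y₀) (hsq : x₀ ^ 2 + x₁ ^ 2 = y₀ ^ 2 + y₁ ^ 2)
    (hmul : x₀ * x₁ = y₀ * y₁) : x₀ = y₀ ∧ x₁ = y₁ := by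
  have hadd : x₀ + x₁ = y₀ + y₁ := (sq_eq_sq₀ (by linarith) (by linarith)).mp (by nlinarith)
  have hsub : x₀ - x₁ = y₀ - y₁ := (sq_eq_sq₀ (by linarith) (by linarith)).mp (by nlinarith)
  constructor <;> linarith

lemma exists_sq_add_sq_eq_and_mul_eq {N P : ℝ} (h : |2 * P| ≤ N) :
    ∃ a b : ℝ, a ^ 2 + b ^ 2 = N ∧ a * b = P := by
  obtain ⟨hP, hP'⟩ := abs_le.mp h
  have hu := Real.sq_sqrt (show 0 ≤ N + 2 * P by linarith)
  have hv := Real.sq_sqrt (show 0 ≤ N - 2 * P by linarith)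
  exact ⟨(√(N + 2 * P) + √(N - 2 * P)) / 2, (√(N + 2 * P) - √(N - 2 * P)) / 2,
    by nlinarith, by nlinarith⟩

lemma sval_fin_two_eq {X : Matrix (Fin 2) (Fin 2) ℂ} {σ₀ σ₁ : ℝ} (hσ : σ₁ ≤ σ₀) (hσ₁ : 0 ≤ σ₁)
    (hsq : ‖X 0 0‖ ^ 2 + ‖X 0 1‖ ^ 2 + ‖X 1 0‖ ^ 2 + ‖X 1 1‖ ^ 2 = σ₀ ^ 2 + σ₁ ^ 2)
    (hdet : ‖X.det‖ = σ₀ * σ₁) : sval X 0 = σ₀ ∧ sval X 1 = σ₁ :=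
  eq_and_eq_of_sq_add_sq_eq_of_mul_eq (sval_nonneg X 1) (sval_antitone X (Fin.zero_le 1)) hσ₁ hσ
    ((sval_fin_two_sq_add_sq X).trans hsq) ((sval_zero_mul_sval_one X).trans hdet)

lemma exists_matrix_fin_two_sval_eq_norm_offDiag_eq {σ₀ σ₁ s t : ℝ} (hσ : σ₁ ≤ σ₀) (hσ₁ : 0 ≤ σ₁)
    (hs : 0 ≤ s) (ht : 0 ≤ t) (hsub : |s - t| ≤ σ₀ - σ₁) (hadd : s + t ≤ σ₀ + σ₁) :
    ∃ X : Matrix (Fin 2) (Fin 2) ℂ,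
      sval X 0 = σ₀ ∧ sval X 1 = σ₁ ∧ ‖X 0 1‖ = s ∧ ‖X 1 0‖ = t := by
  have hsub' : (s - t) ^ 2 ≤ (σ₀ - σ₁) ^ 2 := sq_le_sq' (abs_le.mp hsub).1 (abs_le.mp hsub).2
  have hadd' : (s + t) ^ 2 ≤ (σ₀ + σ₁) ^ 2 := pow_le_pow_left₀ (by positivity) hadd 2
  obtain ⟨a, b, hab_sq, hab_mul⟩ := exists_sq_add_sq_eq_and_mul_eq
    (N := σ₀ ^ 2 + σ₁ ^ 2 - s ^ 2 - t ^ 2) (P := σ₀ * σ₁ - s * t)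
    (abs_le.mpr ⟨by nlinarith, by nlinarith⟩)
  refine ⟨!![(a : ℂ), s; -t, b], ?_⟩
  have hdet : (!![(a : ℂ), s; -t, b]).det = ((σ₀ * σ₁ : ℝ) : ℂ) := by
    rw [det_fin_two_of, show σ₀ * σ₁ = a * b + s * t by linarith]
    push_cast
    ring
  obtain ⟨h₀, h₁⟩ := sval_fin_two_eq (X := !![(a : ℂ), s; -t, b]) hσ hσ₁
    (by simp; linarith) (by simp [hdet, abs_of_nonneg hσ₁, abs_of_nonneg (hσ₁.trans hσ)])
  exact ⟨h₀, h₁, by simp [hs], by simp [ht]⟩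

lemma mem_coneS_one_one_iff {g : Fin (1 + 1) → ℝ} {s t : ℝ} :
    (g, fun _ : Fin 1 => s, fun _ : Fin 1 => t) ∈ coneS 1 1 ↔
      ∃ X : Matrix (Fin 2) (Fin 2) ℂ,
        sval X 0 = g 0 ∧ sval X 1 = g 1 ∧ ‖X 0 1‖ = s ∧ ‖X 1 0‖ = t := by
  simp [coneS, sval_fin_one, blockTR, blockBL, eq_comm, and_assoc]

theorem stmt_9 (g : Fin (1 + 1) → ℝ) (s t : ℝ)
    (hg : g 0 ≥ g 1) (hg0 : g 1 ≥ 0) (hs : s ≥ 0) (ht : t ≥ 0) :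
    (g, fun _ : Fin 1 => s, fun _ : Fin 1 => t) ∈ coneS 1 1 ↔
      (g 0 - g 1 ≥ |s - t| ∧ g 0 + g 1 ≥ s + t) := by
  rw [mem_coneS_one_one_iff]
  constructor
  · rintro ⟨X, h₀, h₁, rfl, rfl⟩
    rw [← h₀, ← h₁]
    exact ⟨abs_norm_sub_norm_le_sval_sub X, norm_add_norm_le_sval_add X⟩
  · rintro ⟨hsub, hadd⟩
    exact exists_matrix_fin_two_sval_eq_norm_offDiag_eq hg hg0 hs ht hsub hadd
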